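/- arXiv:2302.06256 — 2 statements merged into one kernel-verified Lean document; each statement's English description precedes it below -/
import Mathlib

section
/- Every element of GSO₄(F) is of the form ι_α(g) · ι_β(h) for some g, h ∈ GL₂(F). Combined with the kernel computation, this gives a group isomorphism GSO₄(F) ≅ (GL₂(F) × GL₂(F)) / Δ(Fˣ), where Δ(Fˣ) = {(a·I₂, a⁻¹·I₂) : a ∈ Fˣ}. -/
/- STATEMENT 13: Every element of GSO₄(F) is of the form ι_α(g)·ι_β(h) with
g, h ∈ GL₂(F). -/

open Matrix

/-- The antidiagonal matrix `J₄`. -/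
def J4 (F : Type*) [Field F] : Matrix (Fin 4) (Fin 4) F :=
  !![0,0,0,1; 0,0,1,0; 0,1,0,0; 1,0,0,0]

/-- The embedding `ι_α : GL₂ → GL₄`. -/
def iotaA {F : Type*} [Field F] (g : Matrix (Fin 2) (Fin 2) F) :
    Matrix (Fin 4) (Fin 4) F :=
  !![g 0 0, g 0 1, 0, 0;
     g 1 0, g 1 1, 0, 0;
     0, 0, g 0 0, -g 0 1;
     0, 0, -g 1 0, g 1 1]

/-- The embedding `ι_β : GL₂ → GL₄`. -/
def iotaB {F : Type*} [Field F] (g : Matrix (Fin 2) (Fin 2) F) :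
    Matrix (Fin 4) (Fin 4) F :=
  !![g 0 0, 0, g 0 1, 0;
     0, g 0 0, 0, -(g 0 1);
     g 1 0, 0, g 1 1, 0;
     0, -(g 1 0), 0, g 1 1]

section Aux

variable {F : Type*} [Field F]

private lemma par_aux (u1 u2 s1 s2 : F) (h : s1*u2 - s2*u1 = 0) (hu : ¬(u1 = 0 ∧ u2 = 0)) :
    ∃ k, s1 = k*u1 ∧ s2 = k*u2 := by
  by_cases h1 : u1 = 0
  · have h2 : u2 ≠ 0 := fun h2 => hu ⟨h1, h2⟩
    refine ⟨s2/u2, ?_, by field_simp⟩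
    rw [h1, mul_zero]
    have : s1 * u2 = 0 := by linear_combination h + s2 * h1
    exact (mul_eq_zero.mp this).resolve_right h2
  · refine ⟨s1/u1, by field_simp, ?_⟩
    field_simp
    linear_combination -h

private lemma rank1_aux (a b c d : F) (hdet : a*d - b*c = 0) :
    ∃ u1 u2 w1 w2, a = u1*w1 ∧ b = u1*w2 ∧ c = u2*w1 ∧ d = u2*w2 := by
  by_cases ha : a = 0
  · by_cases hb : b = 0
    · exact ⟨0, 1, c, d, by rw [ha]; ring, by rw [hb]; ring, by ring, by ring⟩
    · have hc : c = 0 := by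
        have : b * c = 0 := by linear_combination -hdet + d * ha
        exact (mul_eq_zero.mp this).resolve_left hb
      exact ⟨b, d, 0, 1, by rw [ha]; ring, by ring, by rw [hc]; ring, by ring⟩
  · exact ⟨a, c, 1, b/a, by ring, by field_simp, by ring, by field_simp; linear_combination hdet⟩

private lemma my_det_fin_four (M : Matrix (Fin 4) (Fin 4) F) :
    M.det =
      M 0 0 * (M 1 1 * (M 2 2 * M 3 3 - M 2 3 * M 3 2) - M 1 2 * (M 2 1 * M 3 3 - M 2 3 * M 3 1) + M 1 3 * (M 2 1 * M 3 2 - M 2 2 * M 3 1))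
    - M 0 1 * (M 1 0 * (M 2 2 * M 3 3 - M 2 3 * M 3 2) - M 1 2 * (M 2 0 * M 3 3 - M 2 3 * M 3 0) + M 1 3 * (M 2 0 * M 3 2 - M 2 2 * M 3 0))
    + M 0 2 * (M 1 0 * (M 2 1 * M 3 3 - M 2 3 * M 3 1) - M 1 1 * (M 2 0 * M 3 3 - M 2 3 * M 3 0) + M 1 3 * (M 2 0 * M 3 1 - M 2 1 * M 3 0))
    - M 0 3 * (M 1 0 * (M 2 1 * M 3 2 - M 2 2 * M 3 1) - M 1 1 * (M 2 0 * M 3 2 - M 2 2 * M 3 0) + M 1 2 * (M 2 0 * M 3 1 - M 2 1 * M 3 0)) := by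
  rw [Matrix.det_succ_row_zero, Fin.sum_univ_four]
  simp [Matrix.det_fin_three, Matrix.submatrix_apply, Fin.succAbove, Fin.lt_def,
    show (Fin.succ 2 : Fin 4) = 3 from rfl, show (Fin.succ 1 : Fin 4) = 2 from rfl,
    show (Fin.succ 0 : Fin 4) = 1 from rfl, show (Fin.castSucc 2 : Fin 4) = 2 from rfl,
    show (Fin.castSucc 1 : Fin 4) = 1 from rfl, show (Fin.castSucc 0 : Fin 4) = 0 from rfl,
    show (((3:Fin 4)):ℕ) = 3 from rfl, show (((2:Fin 4)):ℕ) = 2 from rfl,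
    show (((1:Fin 4)):ℕ) = 1 from rfl, show (((0:Fin 4)):ℕ) = 0 from rfl]
  ring

end Aux

set_option maxHeartbeats 2000000 in
theorem GSO4_surjectivity
    (F : Type*) [Field F] (hchar : (2 : F) ≠ 0)
    (M : Matrix (Fin 4) (Fin 4) F) (hM : IsUnit M.det)
    (hGSO : ∃ lam : F, lam ≠ 0 ∧ Mᵀ * J4 F * M = lam • J4 F ∧ M.det = lam ^ 2) :
    ∃ g h : Matrix (Fin 2) (Fin 2) F,
      IsUnit g.det ∧ IsUnit h.det ∧ M = iotaA g * iotaB h := by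
  obtain ⟨lam, hlam, hJ, hdetM⟩ := hGSO
  -- extract scalar equations
  have ext_eq : ∀ k l : Fin 4,
      (Mᵀ * J4 F * M) k l = lam * J4 F k l := by
    intro k l
    have h := congrFun (congrFun hJ k) l
    simpa using h
  have e00 : M 0 0 * M 3 0 + M 1 0 * M 2 0 = 0 := by
    have h := ext_eq 0 0
    simp [Matrix.mul_apply, J4, Fin.sum_univ_four, Matrix.vecHead, Matrix.vecTail] at h
    have h2 : (2:F) * (M 0 0 * M 3 0 + M 1 0 * M 2 0) = (2:F) * 0 := by linear_combination h
    exact mul_left_cancel₀ hchar h2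
  have e11 : M 0 1 * M 3 1 + M 1 1 * M 2 1 = 0 := by
    have h := ext_eq 1 1
    simp [Matrix.mul_apply, J4, Fin.sum_univ_four, Matrix.vecHead, Matrix.vecTail] at h
    have h2 : (2:F) * (M 0 1 * M 3 1 + M 1 1 * M 2 1) = (2:F) * 0 := by linear_combination h
    exact mul_left_cancel₀ hchar h2
  have e22 : M 0 2 * M 3 2 + M 1 2 * M 2 2 = 0 := by
    have h := ext_eq 2 2
    simp [Matrix.mul_apply, J4, Fin.sum_univ_four, Matrix.vecHead, Matrix.vecTail] at h
    have h2 : (2:F) * (M 0 2 * M 3 2 + M 1 2 * M 2 2) = (2:F) * 0 := by linear_combination h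
    exact mul_left_cancel₀ hchar h2
  have e33 : M 0 3 * M 3 3 + M 1 3 * M 2 3 = 0 := by
    have h := ext_eq 3 3
    simp [Matrix.mul_apply, J4, Fin.sum_univ_four, Matrix.vecHead, Matrix.vecTail] at h
    have h2 : (2:F) * (M 0 3 * M 3 3 + M 1 3 * M 2 3) = (2:F) * 0 := by linear_combination h
    exact mul_left_cancel₀ hchar h2
  have e01 : M 0 0 * M 3 1 + M 1 0 * M 2 1 + M 2 0 * M 1 1 + M 3 0 * M 0 1 = 0 := by
    have h := ext_eq 0 1
    simp [Matrix.mul_apply, J4, Fin.sum_univ_four, Matrix.vecHead, Matrix.vecTail] at h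
    linear_combination h
  have e02 : M 0 0 * M 3 2 + M 1 0 * M 2 2 + M 2 0 * M 1 2 + M 3 0 * M 0 2 = 0 := by
    have h := ext_eq 0 2
    simp [Matrix.mul_apply, J4, Fin.sum_univ_four, Matrix.vecHead, Matrix.vecTail] at h
    linear_combination h
  have e13 : M 0 1 * M 3 3 + M 1 1 * M 2 3 + M 2 1 * M 1 3 + M 3 1 * M 0 3 = 0 := by
    have h := ext_eq 1 3
    simp [Matrix.mul_apply, J4, Fin.sum_univ_four, Matrix.vecHead, Matrix.vecTail] at h
    linear_combination h
  have e23 : M 0 2 * M 3 3 + M 1 2 * M 2 3 + M 2 2 * M 1 3 + M 3 2 * M 0 3 = 0 := by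
    have h := ext_eq 2 3
    simp [Matrix.mul_apply, J4, Fin.sum_univ_four, Matrix.vecHead, Matrix.vecTail] at h
    linear_combination h
  have e03 : M 0 0 * M 3 3 + M 1 0 * M 2 3 + M 2 0 * M 1 3 + M 3 0 * M 0 3 = lam := by
    have h := ext_eq 0 3
    simp [Matrix.mul_apply, J4, Fin.sum_univ_four, Matrix.vecHead, Matrix.vecTail] at h
    linear_combination h
  have e12 : M 0 1 * M 3 2 + M 1 1 * M 2 2 + M 2 1 * M 1 2 + M 3 1 * M 0 2 = lam := by
    have h := ext_eq 1 2
    simp [Matrix.mul_apply, J4, Fin.sum_univ_four, Matrix.vecHead, Matrix.vecTail] at h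
    linear_combination h
  -- column 0 as rank-one matrix
  obtain ⟨a1, a2, b1, b2, m00, m20, m10, m30'⟩ :=
    rank1_aux (M 0 0) (M 2 0) (M 1 0) (-(M 3 0)) (by linear_combination -e00)
  have m30 : M 3 0 = -(a2*b2) := by linear_combination -m30'
  -- column 1 as rank-one matrix
  obtain ⟨s1, s2, t1, t2, n01, n21, n11, n31'⟩ :=
    rank1_aux (M 0 1) (M 2 1) (M 1 1) (-(M 3 1)) (by linear_combination -e11)
  have n31 : M 3 1 = -(s2*t2) := by linear_combination -n31'
  have hu1 : ¬(a1 = 0 ∧ a2 = 0) := by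
    rintro ⟨h1, h2⟩
    apply hlam
    have h := e03
    rw [m00, m10, m20, m30, h1, h2] at h
    linear_combination -h
  have hw1 : ¬(b1 = 0 ∧ b2 = 0) := by
    rintro ⟨h1, h2⟩
    apply hlam
    have h := e03
    rw [m00, m10, m20, m30, h1, h2] at h
    linear_combination -h
  have hf : (a1*s2 - a2*s1) * (t1*b2 - t2*b1) = 0 := by
    have h := e01
    rw [m00, m10, m20, m30, n01, n11, n21, n31] at h
    linear_combination h
  by_cases hB : t1*b2 - t2*b1 = 0
  · -- GOOD case : X1 = u₂ w₁ᵀ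
    obtain ⟨k, ht1, ht2⟩ := par_aux b1 b2 t1 t2 hB hw1
    obtain ⟨c1, c2, hc1, hc2⟩ : ∃ c1 c2, c1 = s1*k ∧ c2 = s2*k := ⟨_, _, rfl, rfl⟩
    have m01 : M 0 1 = c1*b1 := by rw [n01, ht1, hc1]; ring
    have m11 : M 1 1 = c2*b1 := by rw [n11, ht1, hc2]; ring
    have m21 : M 2 1 = c1*b2 := by rw [n21, ht2, hc1]; ring
    have m31 : M 3 1 = -(c2*b2) := by rw [n31, ht2, hc2]; ring
    have hu2 : ¬(c1 = 0 ∧ c2 = 0) := by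
      rintro ⟨h1, h2⟩
      apply hlam
      have h := e12
      rw [m01, m11, m21, m31, h1, h2] at h
      linear_combination -h
    -- column 2
    obtain ⟨p1, p2, q1, q2, o02, o22, o12, o32'⟩ :=
      rank1_aux (M 0 2) (M 2 2) (M 1 2) (-(M 3 2)) (by linear_combination -e22)
    have o32 : M 3 2 = -(p2*q2) := by linear_combination -o32'
    have hg2 : (a1*p2 - a2*p1) * (q1*b2 - q2*b1) = 0 := by
      have h := e02
      rw [m00, m10, m20, m30, o02, o12, o22, o32] at h
      linear_combination h
    have hqb : q1*b2 - q2*b1 ≠ 0 := by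
      intro h0
      apply hlam
      have h := e12
      rw [m01, m11, m21, m31, o02, o12, o22, o32] at h
      linear_combination -h + (c1*p2 - c2*p1) * h0
    have hp0 : a1*p2 - a2*p1 = 0 := (mul_eq_zero.mp hg2).resolve_right hqb
    obtain ⟨k2, hp1, hp2⟩ := par_aux a1 a2 p1 p2 (by linear_combination -hp0) hu1
    obtain ⟨d1, d2, hd1, hd2⟩ : ∃ d1 d2, d1 = q1*k2 ∧ d2 = q2*k2 := ⟨_, _, rfl, rfl⟩
    have m02 : M 0 2 = a1*d1 := by rw [o02, hp1, hd1]; ring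
    have m12 : M 1 2 = a2*d1 := by rw [o12, hp2, hd1]; ring
    have m22 : M 2 2 = a1*d2 := by rw [o22, hp1, hd2]; ring
    have m32 : M 3 2 = -(a2*d2) := by rw [o32, hp2, hd2]; ring
    have hPQ : (a1*c2 - a2*c1) * (b1*d2 - b2*d1) = lam := by
      have h := e12
      rw [m01, m11, m21, m31, m02, m12, m22, m32] at h
      linear_combination h
    have hPQ0 : (a1*c2 - a2*c1) * (b1*d2 - b2*d1) ≠ 0 := by rw [hPQ]; exact hlam
    have hP : a1*c2 - a2*c1 ≠ 0 := left_ne_zero_of_mul hPQ0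
    have hQ : b1*d2 - b2*d1 ≠ 0 := right_ne_zero_of_mul hPQ0
    -- column 3
    obtain ⟨r1, r2, z1, z2, o03, o23, o13, o33'⟩ :=
      rank1_aux (M 0 3) (M 2 3) (M 1 3) (-(M 3 3)) (by linear_combination -e33)
    have o33 : M 3 3 = -(r2*z2) := by linear_combination -o33'
    have hE03 : (a1*r2 - a2*r1) * (z1*b2 - z2*b1) = lam := by
      have h := e03
      rw [m00, m10, m20, m30, o03, o13, o23, o33] at h
      linear_combination h
    have hE03ne : (a1*r2 - a2*r1) * (z1*b2 - z2*b1) ≠ 0 := by rw [hE03]; exact hlam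
    have hra : a1*r2 - a2*r1 ≠ 0 := left_ne_zero_of_mul hE03ne
    have hzb : z1*b2 - z2*b1 ≠ 0 := right_ne_zero_of_mul hE03ne
    have h13 : (c1*r2 - c2*r1) * (z1*b2 - z2*b1) = 0 := by
      have h := e13
      rw [m01, m11, m21, m31, o03, o13, o23, o33] at h
      linear_combination h
    have hcr : c1*r2 - c2*r1 = 0 := (mul_eq_zero.mp h13).resolve_right hzb
    obtain ⟨mu, hr1, hr2⟩ := par_aux c1 c2 r1 r2 (by linear_combination -hcr) hu2
    have h23 : (a1*r2 - a2*r1) * (z1*d2 - z2*d1) = 0 := by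
      have h := e23
      rw [m02, m12, m22, m32, o03, o13, o23, o33] at h
      linear_combination h
    have hzd : z1*d2 - z2*d1 = 0 := (mul_eq_zero.mp h23).resolve_left hra
    have hd0 : ¬(d1 = 0 ∧ d2 = 0) := by
      rintro ⟨h1, h2⟩
      exact hQ (by rw [h1, h2]; ring)
    obtain ⟨nu, hz1, hz2⟩ := par_aux d1 d2 z1 z2 hzd hd0
    have h19 : (mu*nu) * lam = -lam := by
      rw [hr1, hr2, hz1, hz2] at hE03
      linear_combination -hE03 - (mu*nu)*hPQ
    have hmn : mu*nu = -1 := by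
      apply mul_right_cancel₀ hlam
      linear_combination h19
    have m03 : M 0 3 = -(c1*d1) := by rw [o03, hr1, hz1]; linear_combination c1*d1*hmn
    have m13 : M 1 3 = -(c2*d1) := by rw [o13, hr2, hz1]; linear_combination c2*d1*hmn
    have m23 : M 2 3 = -(c1*d2) := by rw [o23, hr1, hz2]; linear_combination c1*d2*hmn
    have m33 : M 3 3 = c2*d2 := by rw [o33, hr2, hz2]; linear_combination -(c2*d2)*hmn
    refine ⟨!![a1, c1; a2, c2], !![b1, d1; b2, d2], ?_, ?_, ?_⟩
    · rw [Matrix.det_fin_two_of]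
      exact isUnit_iff_ne_zero.mpr (fun h => hP (by linear_combination h))
    · rw [Matrix.det_fin_two_of]
      exact isUnit_iff_ne_zero.mpr (fun h => hQ (by linear_combination h))
    · ext i j
      fin_cases i <;> fin_cases j <;>
        simp [iotaA, iotaB, Matrix.mul_apply, Fin.sum_univ_four] <;>
        first
          | linear_combination m00 | linear_combination m01 | linear_combination m02
          | linear_combination m03 | linear_combination m10 | linear_combination m11
          | linear_combination m12 | linear_combination m13 | linear_combination m20
          | linear_combination m21 | linear_combination m22 | linear_combination m23
          | linear_combination m30 | linear_combination m31 | linear_combination m32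
          | linear_combination m33
  · -- BAD case : leads to a contradiction with det M = lam²
    exfalso
    have hG : a1*s2 - a2*s1 = 0 := (mul_eq_zero.mp hf).resolve_right hB
    obtain ⟨ka, hs1, hs2⟩ := par_aux a1 a2 s1 s2 (by linear_combination -hG) hu1
    have n01' : M 0 1 = a1*(ka*t1) := by rw [n01, hs1]; ring
    have n11' : M 1 1 = a2*(ka*t1) := by rw [n11, hs2]; ring
    have n21' : M 2 1 = a1*(ka*t2) := by rw [n21, hs1]; ring
    have n31'' : M 3 1 = -(a2*(ka*t2)) := by rw [n31, hs2]; ring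
    obtain ⟨p1, p2, q1, q2, o02, o22, o12, o32'⟩ :=
      rank1_aux (M 0 2) (M 2 2) (M 1 2) (-(M 3 2)) (by linear_combination -e22)
    have o32 : M 3 2 = -(p2*q2) := by linear_combination -o32'
    have hE12b : (a1*p2 - a2*p1) * (q1*(ka*t2) - q2*(ka*t1)) = lam := by
      have h := e12
      rw [n01', n11', n21', n31'', o02, o12, o22, o32] at h
      linear_combination h
    have hE12bne : (a1*p2 - a2*p1) * (q1*(ka*t2) - q2*(ka*t1)) ≠ 0 := by rw [hE12b]; exact hlam
    have hapb : a1*p2 - a2*p1 ≠ 0 := left_ne_zero_of_mul hE12bne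
    have hqtb : q1*(ka*t2) - q2*(ka*t1) ≠ 0 := right_ne_zero_of_mul hE12bne
    have h02 : (a1*p2 - a2*p1) * (q1*b2 - q2*b1) = 0 := by
      have h := e02
      rw [m00, m10, m20, m30, o02, o12, o22, o32] at h
      linear_combination h
    have hqb0 : q1*b2 - q2*b1 = 0 := (mul_eq_zero.mp h02).resolve_left hapb
    obtain ⟨rh, hq1, hq2⟩ := par_aux b1 b2 q1 q2 hqb0 hw1
    have o02' : M 0 2 = p1*(rh*b1) := by rw [o02, hq1]
    have o12' : M 1 2 = p2*(rh*b1) := by rw [o12, hq1]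
    have o22' : M 2 2 = p1*(rh*b2) := by rw [o22, hq2]
    have o32'' : M 3 2 = -(p2*(rh*b2)) := by rw [o32, hq2]
    obtain ⟨r1, r2, z1, z2, o03, o23, o13, o33'⟩ :=
      rank1_aux (M 0 3) (M 2 3) (M 1 3) (-(M 3 3)) (by linear_combination -e33)
    have o33 : M 3 3 = -(r2*z2) := by linear_combination -o33'
    have hE03b : (a1*r2 - a2*r1) * (z1*b2 - z2*b1) = lam := by
      have h := e03
      rw [m00, m10, m20, m30, o03, o13, o23, o33] at h
      linear_combination h
    have hE03bne : (a1*r2 - a2*r1) * (z1*b2 - z2*b1) ≠ 0 := by rw [hE03b]; exact hlam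
    have har : a1*r2 - a2*r1 ≠ 0 := left_ne_zero_of_mul hE03bne
    have hzb : z1*b2 - z2*b1 ≠ 0 := right_ne_zero_of_mul hE03bne
    have h13 : (a1*r2 - a2*r1) * (z1*(ka*t2) - z2*(ka*t1)) = 0 := by
      have h := e13
      rw [n01', n11', n21', n31'', o03, o13, o23, o33] at h
      linear_combination h
    have hzkt : z1*(ka*t2) - z2*(ka*t1) = 0 := (mul_eq_zero.mp h13).resolve_left har
    have hkt0 : ¬(ka*t1 = 0 ∧ ka*t2 = 0) := by
      rintro ⟨h1, h2⟩
      exact hqtb (by rw [h1, h2]; ring)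
    obtain ⟨nu, hz1, hz2⟩ := par_aux (ka*t1) (ka*t2) z1 z2 hzkt hkt0
    have h23 : (p1*r2 - p2*r1) * (z1*(rh*b2) - z2*(rh*b1)) = 0 := by
      have h := e23
      rw [o02', o12', o22', o32'', o03, o13, o23, o33] at h
      linear_combination h
    have hrh : rh ≠ 0 := by
      intro h0
      exact hqtb (by rw [hq1, hq2, h0]; ring)
    have hsec : z1*(rh*b2) - z2*(rh*b1) ≠ 0 := by
      intro h0
      have hh : rh * (z1*b2 - z2*b1) = 0 := by linear_combination h0
      rcases mul_eq_zero.mp hh with h | h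
      · exact hrh h
      · exact hzb h
    have hpr : p1*r2 - p2*r1 = 0 := (mul_eq_zero.mp h23).resolve_right hsec
    have hp0 : ¬(p1 = 0 ∧ p2 = 0) := by
      rintro ⟨h1, h2⟩
      exact hapb (by rw [h1, h2]; ring)
    obtain ⟨mu, hr1, hr2⟩ := par_aux p1 p2 r1 r2 (by linear_combination -hpr) hp0
    have hD : M.det =
        mu*nu*(ka^2*rh*((a1*p2 - a2*p1)^2*(b1*t2 - b2*t1)^2)) := by
      rw [my_det_fin_four, m00, m10, m20, m30, n01', n11', n21', n31'',
        o02', o12', o22', o32'', o03, o13, o23, o33, hr1, hr2, hz1, hz2]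
      ring
    have hfinal : (2:F) * lam^2 = 0 := by
      rw [hq1, hq2] at hE12b
      rw [hr1, hr2, hz1, hz2] at hE03b
      linear_combination (-1:F)*hdetM + hD - lam*hE12b
        - ((a1*p2 - a2*p1) * ((rh*b1)*(ka*t2) - (rh*b2)*(ka*t1)))*hE03b
    rcases mul_eq_zero.mp hfinal with h | h
    · exact hchar h
    · exact hlam (sq_eq_zero_iff.mp h)
end

section
/- Bruhat decomposition for SO₄: every g ∈ SO₄(F) lies in exactly one of the four double cosets B, B s_α B, B s_β B, B s_α s_β B; that is, SO₄(F) is the disjoint union of these four sets. -/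
/- STATEMENT 18: Bruhat decomposition for SO₄: SO₄(F) is the disjoint union of
the four double cosets B, B s_α B, B s_β B, B s_α s_β B. -/

open Matrix

/-- The special orthogonal group `SO₄(F)`, as a set of 4×4 matrices. -/
def SO4 (F : Type*) [Field F] : Set (Matrix (Fin 4) (Fin 4) F) :=
  {g | gᵀ * J4 F * g = J4 F ∧ g.det = 1}

/-- The BorelSO4 subgroup `B` of upper triangular matrices in `SO₄(F)`. -/
def BorelSO4 (F : Type*) [Field F] : Set (Matrix (Fin 4) (Fin 4) F) :=
  {b | b ∈ SO4 F ∧ ∀ i j : Fin 4, j < i → b i j = 0}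

/-- The Weyl element `s_α`. -/
def sAlpha (F : Type*) [Field F] : Matrix (Fin 4) (Fin 4) F :=
  !![0,1,0,0; -1,0,0,0; 0,0,0,-1; 0,0,1,0]

/-- The Weyl element `s_β`. -/
def sBeta (F : Type*) [Field F] : Matrix (Fin 4) (Fin 4) F :=
  !![0,0,1,0; 0,0,0,-1; -1,0,0,0; 0,1,0,0]

/-- The double coset `B w B`. -/
def doubleCoset (F : Type*) [Field F] (w : Matrix (Fin 4) (Fin 4) F) :
    Set (Matrix (Fin 4) (Fin 4) F) :=
  {x | ∃ b₁ ∈ BorelSO4 F, ∃ b₂ ∈ BorelSO4 F, x = b₁ * w * b₂}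

/- ------------------ auxiliary lemmas ------------------ -/

theorem bruhatAux.det_fin_four {R : Type*} [CommRing R] (A : Matrix (Fin 4) (Fin 4) R) :
    A.det =
      A 0 0 * A 1 1 * A 2 2 * A 3 3 - A 0 0 * A 1 1 * A 2 3 * A 3 2 -
        A 0 0 * A 1 2 * A 2 1 * A 3 3 + A 0 0 * A 1 2 * A 2 3 * A 3 1 +
        A 0 0 * A 1 3 * A 2 1 * A 3 2 - A 0 0 * A 1 3 * A 2 2 * A 3 1 -
        A 0 1 * A 1 0 * A 2 2 * A 3 3 + A 0 1 * A 1 0 * A 2 3 * A 3 2 +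
        A 0 1 * A 1 2 * A 2 0 * A 3 3 - A 0 1 * A 1 2 * A 2 3 * A 3 0 -
        A 0 1 * A 1 3 * A 2 0 * A 3 2 + A 0 1 * A 1 3 * A 2 2 * A 3 0 +
        A 0 2 * A 1 0 * A 2 1 * A 3 3 - A 0 2 * A 1 0 * A 2 3 * A 3 1 -
        A 0 2 * A 1 1 * A 2 0 * A 3 3 + A 0 2 * A 1 1 * A 2 3 * A 3 0 +
        A 0 2 * A 1 3 * A 2 0 * A 3 1 - A 0 2 * A 1 3 * A 2 1 * A 3 0 -
        A 0 3 * A 1 0 * A 2 1 * A 3 2 + A 0 3 * A 1 0 * A 2 2 * A 3 1 +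
        A 0 3 * A 1 1 * A 2 0 * A 3 2 - A 0 3 * A 1 1 * A 2 2 * A 3 0 -
        A 0 3 * A 1 2 * A 2 0 * A 3 1 + A 0 3 * A 1 2 * A 2 1 * A 3 0 := by
  rw [Matrix.det_succ_row_zero]
  simp [Fin.sum_univ_succ, Matrix.det_fin_three, Matrix.submatrix,
    show (Fin.succ 2 : Fin 4) = 3 by decide, show ((2:Fin 4).succAbove 2) = (3:Fin 4) by decide,
    show ((3:Fin 4).succAbove 2) = (2:Fin 4) by decide, show ((1:Fin 4).succAbove 2) = (3:Fin 4) by decide]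
  ring

namespace bruhatAux

variable {F : Type*} [Field F]

lemma J4_mul_J4 : J4 F * J4 F = 1 := by
  ext i j
  fin_cases i <;> fin_cases j <;>
    simp [J4, Matrix.mul_apply, Fin.sum_univ_four, Matrix.vecHead, Matrix.vecTail]

lemma SO4.mul {a b : Matrix (Fin 4) (Fin 4) F} (ha : a ∈ SO4 F) (hb : b ∈ SO4 F) :
    a * b ∈ SO4 F := by
  obtain ⟨ha1, ha2⟩ := ha
  obtain ⟨hb1, hb2⟩ := hb
  constructor
  · have h : (a * b)ᵀ * J4 F * (a * b) = bᵀ * (aᵀ * J4 F * a) * b := by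
      rw [Matrix.transpose_mul]; simp only [Matrix.mul_assoc]
    rw [h, ha1, hb1]
  · rw [Matrix.det_mul, ha2, hb2, one_mul]

lemma SO4.gJgT {g : Matrix (Fin 4) (Fin 4) F} (hg : g ∈ SO4 F) :
    g * J4 F * gᵀ = J4 F := by
  have h1 : (J4 F * gᵀ * J4 F) * g = 1 := by
    calc (J4 F * gᵀ * J4 F) * g = J4 F * (gᵀ * J4 F * g) := by simp only [Matrix.mul_assoc]
      _ = J4 F * J4 F := by rw [hg.1]
      _ = 1 := J4_mul_J4
  have h2 : g * (J4 F * gᵀ * J4 F) = 1 := mul_eq_one_comm.mpr h1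
  calc g * J4 F * gᵀ = g * J4 F * gᵀ * (J4 F * J4 F) := by rw [J4_mul_J4, Matrix.mul_one]
    _ = (g * (J4 F * gᵀ * J4 F)) * J4 F := by simp only [Matrix.mul_assoc]
    _ = J4 F := by rw [h2, Matrix.one_mul]

lemma so4_col {g : Matrix (Fin 4) (Fin 4) F} (hg : g ∈ SO4 F) (i j : Fin 4) :
    g 0 i * g 3 j + g 1 i * g 2 j + g 2 i * g 1 j + g 3 i * g 0 j
      = if (i : ℕ) + (j : ℕ) = 3 then 1 else 0 := by
  have h := congrFun (congrFun hg.1 i) j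
  fin_cases i <;> fin_cases j <;>
    (simp [J4, Matrix.mul_apply, Fin.sum_univ_four, Matrix.transpose_apply,
      Matrix.vecHead, Matrix.vecTail] at h ⊢) <;> linear_combination h

lemma so4_row {g : Matrix (Fin 4) (Fin 4) F} (hg : g ∈ SO4 F) (i j : Fin 4) :
    g i 0 * g j 3 + g i 1 * g j 2 + g i 2 * g j 1 + g i 3 * g j 0
      = if (i : ℕ) + (j : ℕ) = 3 then 1 else 0 := by
  have h := congrFun (congrFun (SO4.gJgT hg) i) j
  fin_cases i <;> fin_cases j <;>
    (simp [J4, Matrix.mul_apply, Fin.sum_univ_four, Matrix.transpose_apply,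
      Matrix.vecHead, Matrix.vecTail] at h ⊢) <;> linear_combination h

lemma one_mem_SO4 : (1 : Matrix (Fin 4) (Fin 4) F) ∈ SO4 F := by
  constructor
  · simp
  · simp

lemma one_mem_B : (1 : Matrix (Fin 4) (Fin 4) F) ∈ BorelSO4 F := by
  refine ⟨one_mem_SO4, ?_⟩
  intro i j hij
  exact Matrix.one_apply_ne (ne_of_lt hij).symm


lemma sA_mem : sAlpha F ∈ SO4 F := by
  constructor
  · ext i j
    fin_cases i <;> fin_cases j <;>
      simp [J4, sAlpha, Matrix.mul_apply, Fin.sum_univ_four, Matrix.transpose_apply,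
        Matrix.vecHead, Matrix.vecTail]
  · rw [bruhatAux.det_fin_four]
    simp [sAlpha]

lemma sB_mem : sBeta F ∈ SO4 F := by
  constructor
  · ext i j
    fin_cases i <;> fin_cases j <;>
      simp [J4, sBeta, Matrix.mul_apply, Fin.sum_univ_four, Matrix.transpose_apply,
        Matrix.vecHead, Matrix.vecTail]
  · rw [bruhatAux.det_fin_four]
    simp [sBeta]

lemma neg_mem_SO4 {g : Matrix (Fin 4) (Fin 4) F} (hg : g ∈ SO4 F) : -g ∈ SO4 F := by
  obtain ⟨h1, h2⟩ := hg
  constructor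
  · simpa using h1
  · rw [Matrix.det_neg, h2]; norm_num

lemma w0_mem : sAlpha F * sBeta F ∈ SO4 F := SO4.mul sA_mem sB_mem

lemma w0_eq : sAlpha F * sBeta F = !![0,0,0,(-1:F); 0,0,-1,0; 0,-1,0,0; -1,0,0,0] := by
  ext i j
  fin_cases i <;> fin_cases j <;>
    simp [sAlpha, sBeta, Matrix.mul_apply, Fin.sum_univ_four,
      Matrix.vecHead, Matrix.vecTail]

lemma w0_sq : (sAlpha F * sBeta F) * (sAlpha F * sBeta F) = 1 := by
  rw [w0_eq]
  ext i j
  fin_cases i <;> fin_cases j <;>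
    simp [Matrix.mul_apply, Fin.sum_univ_four, Matrix.vecHead, Matrix.vecTail]

lemma negsA_mul : (-(sAlpha F)) * sAlpha F = 1 := by
  ext i j
  fin_cases i <;> fin_cases j <;>
    simp [sAlpha, Matrix.mul_apply, Fin.sum_univ_four, Matrix.vecHead, Matrix.vecTail]

lemma negsB_mul : (-(sBeta F)) * sBeta F = 1 := by
  ext i j
  fin_cases i <;> fin_cases j <;>
    simp [sBeta, Matrix.mul_apply, Fin.sum_univ_four, Matrix.vecHead, Matrix.vecTail]

/-- upper triangular unipotent element of the Borel -/
def unip (u v : F) : Matrix (Fin 4) (Fin 4) F :=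
  !![1,u,v,-(u*v); 0,1,0,-v; 0,0,1,-u; 0,0,0,1]

lemma unip_mul_neg (u v : F) : unip u v * unip (-u) (-v) = 1 := by
  ext i j
  fin_cases i <;> fin_cases j <;>
    (simp [unip, Matrix.mul_apply, Fin.sum_univ_four, Matrix.vecHead, Matrix.vecTail]; try ring)

lemma unip_mem (u v : F) : unip u v ∈ BorelSO4 F := by
  refine ⟨⟨?_, ?_⟩, ?_⟩
  · ext i j
    fin_cases i <;> fin_cases j <;>
      (simp [unip, J4, Matrix.mul_apply, Fin.sum_univ_four, Matrix.transpose_apply,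
        Matrix.vecHead, Matrix.vecTail]; try ring)
  · rw [bruhatAux.det_fin_four]
    simp [unip]
  · intro i j hij
    fin_cases i <;> fin_cases j <;>
      simp_all [unip, Matrix.vecHead, Matrix.vecTail]

lemma diag_ne {b : Matrix (Fin 4) (Fin 4) F} (hb : b ∈ BorelSO4 F) (i : Fin 4) :
    b i i ≠ 0 := by
  have h10 := hb.2 1 0 (by decide)
  have h20 := hb.2 2 0 (by decide)
  have h30 := hb.2 3 0 (by decide)
  have h21 := hb.2 2 1 (by decide)
  have h31 := hb.2 3 1 (by decide)
  have h32 := hb.2 3 2 (by decide)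
  have hd := hb.1.2
  rw [bruhatAux.det_fin_four, h10, h20, h30, h21, h31, h32] at hd
  ring_nf at hd
  have he : b 0 0 * b 1 1 * b 2 2 * b 3 3 = 1 := by linear_combination hd
  fin_cases i <;> intro h <;>
    simp only [Fin.zero_eta, Fin.mk_one, Fin.reduceFinMk] at h <;>
    rw [h] at he <;> simp at he


lemma borel_mul_row3 {b c : Matrix (Fin 4) (Fin 4) F} (hb : b ∈ BorelSO4 F) (j : Fin 4) :
    (b * c) 3 j = b 3 3 * c 3 j := by
  have h0 := hb.2 3 0 (by decide)
  have h1 := hb.2 3 1 (by decide)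
  have h2 := hb.2 3 2 (by decide)
  simp [Matrix.mul_apply, Fin.sum_univ_four, h0, h1, h2]

lemma dc1_row {x : Matrix (Fin 4) (Fin 4) F} (hx : x ∈ doubleCoset F 1) :
    x 3 0 = 0 ∧ x 3 1 = 0 ∧ x 3 2 = 0 ∧ x 3 3 ≠ 0 := by
  obtain ⟨b₁, hb₁, b₂, hb₂, rfl⟩ := hx
  rw [Matrix.mul_one]
  have h := fun j => borel_mul_row3 (c := b₂) hb₁ j
  refine ⟨?_, ?_, ?_, ?_⟩
  · rw [h 0, hb₂.2 3 0 (by decide), mul_zero]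
  · rw [h 1, hb₂.2 3 1 (by decide), mul_zero]
  · rw [h 2, hb₂.2 3 2 (by decide), mul_zero]
  · rw [h 3]; exact mul_ne_zero (diag_ne hb₁ 3) (diag_ne hb₂ 3)

lemma dcA_row {x : Matrix (Fin 4) (Fin 4) F} (hx : x ∈ doubleCoset F (sAlpha F)) :
    x 3 0 = 0 ∧ x 3 1 = 0 ∧ x 3 2 ≠ 0 := by
  obtain ⟨b₁, hb₁, b₂, hb₂, rfl⟩ := hx
  rw [Matrix.mul_assoc]
  have h := fun j => borel_mul_row3 (c := sAlpha F * b₂) hb₁ j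
  have hrow : ∀ j, (sAlpha F * b₂) 3 j = b₂ 2 j := by
    intro j
    simp [sAlpha, Matrix.mul_apply, Fin.sum_univ_four, Matrix.vecHead, Matrix.vecTail]
  refine ⟨?_, ?_, ?_⟩
  · rw [h 0, hrow 0, hb₂.2 2 0 (by decide), mul_zero]
  · rw [h 1, hrow 1, hb₂.2 2 1 (by decide), mul_zero]
  · rw [h 2, hrow 2]; exact mul_ne_zero (diag_ne hb₁ 3) (diag_ne hb₂ 2)

lemma dcB_row {x : Matrix (Fin 4) (Fin 4) F} (hx : x ∈ doubleCoset F (sBeta F)) :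
    x 3 0 = 0 ∧ x 3 1 ≠ 0 := by
  obtain ⟨b₁, hb₁, b₂, hb₂, rfl⟩ := hx
  rw [Matrix.mul_assoc]
  have h := fun j => borel_mul_row3 (c := sBeta F * b₂) hb₁ j
  have hrow : ∀ j, (sBeta F * b₂) 3 j = b₂ 1 j := by
    intro j
    simp [sBeta, Matrix.mul_apply, Fin.sum_univ_four, Matrix.vecHead, Matrix.vecTail]
  refine ⟨?_, ?_⟩
  · rw [h 0, hrow 0, hb₂.2 1 0 (by decide), mul_zero]
  · rw [h 1, hrow 1]; exact mul_ne_zero (diag_ne hb₁ 3) (diag_ne hb₂ 1)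

lemma dcW_row {x : Matrix (Fin 4) (Fin 4) F} (hx : x ∈ doubleCoset F (sAlpha F * sBeta F)) :
    x 3 0 ≠ 0 := by
  obtain ⟨b₁, hb₁, b₂, hb₂, rfl⟩ := hx
  rw [Matrix.mul_assoc]
  have h := borel_mul_row3 (c := (sAlpha F * sBeta F) * b₂) hb₁ 0
  have hrow : ((sAlpha F * sBeta F) * b₂) 3 0 = -b₂ 0 0 := by
    rw [w0_eq]
    simp [Matrix.mul_apply, Fin.sum_univ_four, Matrix.vecHead, Matrix.vecTail]
  rw [h, hrow]
  exact mul_ne_zero (diag_ne hb₁ 3) (neg_ne_zero.mpr (diag_ne hb₂ 0))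


lemma fv3 : ((3:Fin 4):ℕ) = 3 := rfl

lemma cell_one (hchar : (2:F) ≠ 0) {m : Matrix (Fin 4) (Fin 4) F} (hm : m ∈ SO4 F)
    (h0 : m 3 0 = 0) (h1 : m 3 1 = 0) (h2 : m 3 2 = 0) : m ∈ BorelSO4 F := by
  have h33 : m 3 3 ≠ 0 := by
    intro h
    have hz : m.det = 0 :=
      Matrix.det_eq_zero_of_row_eq_zero 3 (fun j => by fin_cases j <;> assumption)
    rw [hm.2] at hz; exact one_ne_zero hz
  have hm20 : m 2 0 = 0 := by
    have e := so4_row hm 3 2; rw [h0, h1, h2] at e; norm_num [fv3] at e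
    exact e.resolve_left h33
  have hm10 : m 1 0 = 0 := by
    have e := so4_row hm 3 1; rw [h0, h1, h2] at e; norm_num [fv3] at e
    exact e.resolve_left h33
  have e0 : m 3 3 * m 0 0 = 1 := by
    have e := so4_row hm 3 0; rw [h0, h1, h2] at e; norm_num [fv3] at e
    linear_combination e
  have hm21 : m 2 1 = 0 := by
    by_contra hq
    have c1 : m 1 1 = 0 := by
      have c := so4_col hm 1 1; rw [h1] at c; norm_num [fv3] at c
      have c' : (m 1 1 * m 2 1) * 2 = 0 := by linear_combination c
      exact (mul_eq_zero.mp ((mul_eq_zero.mp c').resolve_right hchar)).resolve_right hq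
    have c2 : m 2 2 = 0 := by
      have c := so4_row hm 2 2; rw [hm20] at c; norm_num [fv3] at c
      have c' : (m 2 1 * m 2 2) * 2 = 0 := by linear_combination c
      exact (mul_eq_zero.mp ((mul_eq_zero.mp c').resolve_right hchar)).resolve_left hq
    have c3 : m 2 1 * m 1 2 = 1 := by
      have c := so4_col hm 1 2; rw [h2, h1, c1] at c
      norm_num [fv3] at c; linear_combination c
    have hdet := hm.2
    rw [bruhatAux.det_fin_four] at hdet
    rw [h0, h1, h2, hm10, hm20, c1, c2] at hdet
    ring_nf at hdet
    have : (2:F) = 0 := by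
      linear_combination (-1) * hdet + (-(m 2 1 * m 1 2)) * e0 + (-1) * c3
    exact hchar this
  refine ⟨hm, ?_⟩
  intro i j hij
  fin_cases i <;> fin_cases j <;>
    simp only [Fin.zero_eta, Fin.mk_one, Fin.reduceFinMk] at hij ⊢ <;>
    first
      | exact absurd hij (by decide)
      | assumption

lemma cell_beta (hchar : (2:F) ≠ 0) {m : Matrix (Fin 4) (Fin 4) F} (hm : m ∈ SO4 F)
    (h0 : m 3 0 = 0) (h2 : m 3 2 = 0) (h3 : m 3 3 = 0) :
    m * (-(sBeta F)) ∈ BorelSO4 F := by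
  have h31 : m 3 1 ≠ 0 := by
    intro h
    have hz : m.det = 0 :=
      Matrix.det_eq_zero_of_row_eq_zero 3 (fun j => by fin_cases j <;> assumption)
    rw [hm.2] at hz; exact one_ne_zero hz
  have hm22 : m 2 2 = 0 := by
    have e := so4_row hm 3 2; rw [h0, h2, h3] at e; norm_num [fv3] at e
    exact e.resolve_left h31
  have hm12 : m 1 2 = 0 := by
    have e := so4_row hm 3 1; rw [h0, h2, h3] at e; norm_num [fv3] at e
    exact e.resolve_left h31
  have e0 : m 3 1 * m 0 2 = 1 := by
    have e := so4_row hm 3 0; rw [h0, h2, h3] at e; norm_num [fv3] at e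
    linear_combination e
  have hm23 : m 2 3 = 0 := by
    by_contra hq
    have c1 : m 1 3 = 0 := by
      have c := so4_col hm 3 3; rw [h3] at c; norm_num [fv3] at c
      have c' : (m 1 3 * m 2 3) * 2 = 0 := by linear_combination c
      exact (mul_eq_zero.mp ((mul_eq_zero.mp c').resolve_right hchar)).resolve_right hq
    have c2 : m 1 0 * m 2 3 = 1 := by
      have c := so4_col hm 0 3; rw [h3, h0, c1] at c
      norm_num [fv3] at c; linear_combination c
    have hdet := hm.2
    rw [bruhatAux.det_fin_four] at hdet
    rw [h0, h2, h3, hm22, hm12, c1] at hdet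
    ring_nf at hdet
    have : (2:F) = 0 := by
      linear_combination (-1) * hdet + (-(m 1 0 * m 2 3)) * e0 + (-1) * c2
    exact hchar this
  refine ⟨SO4.mul hm (neg_mem_SO4 sB_mem), ?_⟩
  intro i j hij
  fin_cases i <;> fin_cases j <;>
    simp only [Fin.zero_eta, Fin.mk_one, Fin.reduceFinMk] at hij ⊢ <;>
    first
      | exact absurd hij (by decide)
      | simp [sBeta, Matrix.mul_apply, Matrix.neg_apply, Fin.sum_univ_four,
          Matrix.vecHead, Matrix.vecTail, h0, h2, h3, hm22, hm12, hm23]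

lemma cell_alpha (hchar : (2:F) ≠ 0) {m : Matrix (Fin 4) (Fin 4) F} (hm : m ∈ SO4 F)
    (h0 : m 3 0 = 0) (h1 : m 3 1 = 0) (h3 : m 3 3 = 0) :
    m * (-(sAlpha F)) ∈ BorelSO4 F := by
  have h32 : m 3 2 ≠ 0 := by
    intro h
    have hz : m.det = 0 :=
      Matrix.det_eq_zero_of_row_eq_zero 3 (fun j => by fin_cases j <;> assumption)
    rw [hm.2] at hz; exact one_ne_zero hz
  have hm11 : m 1 1 = 0 := by
    have e := so4_row hm 3 1; rw [h0, h1, h3] at e; norm_num [fv3] at e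
    exact e.resolve_left h32
  have hm21 : m 2 1 = 0 := by
    have e := so4_row hm 3 2; rw [h0, h1, h3] at e; norm_num [fv3] at e
    exact e.resolve_left h32
  have e0 : m 3 2 * m 0 1 = 1 := by
    have e := so4_row hm 3 0; rw [h0, h1, h3] at e; norm_num [fv3] at e
    linear_combination e
  have hm20 : m 2 0 = 0 := by
    by_contra hq
    have c1 : m 1 0 = 0 := by
      have c := so4_col hm 0 0; rw [h0] at c; norm_num [fv3] at c
      have c' : (m 1 0 * m 2 0) * 2 = 0 := by linear_combination c
      exact (mul_eq_zero.mp ((mul_eq_zero.mp c').resolve_right hchar)).resolve_right hq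
    have c2 : m 2 0 * m 1 3 = 1 := by
      have c := so4_col hm 0 3; rw [h3, h0, c1] at c
      norm_num [fv3] at c; linear_combination c
    have hdet := hm.2
    rw [bruhatAux.det_fin_four] at hdet
    rw [h0, h1, h3, hm11, hm21, c1] at hdet
    ring_nf at hdet
    have : (2:F) = 0 := by
      linear_combination (-1) * hdet + (-(m 2 0 * m 1 3)) * e0 + (-1) * c2
    exact hchar this
  refine ⟨SO4.mul hm (neg_mem_SO4 sA_mem), ?_⟩
  intro i j hij
  fin_cases i <;> fin_cases j <;>
    simp only [Fin.zero_eta, Fin.mk_one, Fin.reduceFinMk] at hij ⊢ <;>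
    first
      | exact absurd hij (by decide)
      | simp [sAlpha, Matrix.mul_apply, Matrix.neg_apply, Fin.sum_univ_four,
          Matrix.vecHead, Matrix.vecTail, h0, h1, h3, hm11, hm21, hm20]

lemma cell_w0 (hchar : (2:F) ≠ 0) {m : Matrix (Fin 4) (Fin 4) F} (hm : m ∈ SO4 F)
    (h1 : m 3 1 = 0) (h2 : m 3 2 = 0) (h3 : m 3 3 = 0) :
    m * (sAlpha F * sBeta F) ∈ BorelSO4 F := by
  have h30 : m 3 0 ≠ 0 := by
    intro h
    have hz : m.det = 0 :=
      Matrix.det_eq_zero_of_row_eq_zero 3 (fun j => by fin_cases j <;> assumption)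
    rw [hm.2] at hz; exact one_ne_zero hz
  have hm13 : m 1 3 = 0 := by
    have e := so4_row hm 3 1; rw [h1, h2, h3] at e; norm_num [fv3] at e
    exact e.resolve_left h30
  have hm23 : m 2 3 = 0 := by
    have e := so4_row hm 3 2; rw [h1, h2, h3] at e; norm_num [fv3] at e
    exact e.resolve_left h30
  have e0 : m 3 0 * m 0 3 = 1 := by
    have e := so4_row hm 3 0; rw [h1, h2, h3] at e; norm_num [fv3] at e
    linear_combination e
  have hm22 : m 2 2 = 0 := by
    by_contra hq
    have c1 : m 1 2 = 0 := by
      have c := so4_col hm 2 2; rw [h2] at c; norm_num [fv3] at c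
      have c' : (m 1 2 * m 2 2) * 2 = 0 := by linear_combination c
      exact (mul_eq_zero.mp ((mul_eq_zero.mp c').resolve_right hchar)).resolve_right hq
    have c2 : m 2 1 = 0 := by
      have c := so4_row hm 2 2; rw [hm23] at c; norm_num [fv3] at c
      have c' : (m 2 1 * m 2 2) * 2 = 0 := by linear_combination c
      exact (mul_eq_zero.mp ((mul_eq_zero.mp c').resolve_right hchar)).resolve_right hq
    have c3 : m 1 1 * m 2 2 = 1 := by
      have c := so4_col hm 1 2; rw [h2, h1, c2, c1] at c
      norm_num [fv3] at c; linear_combination c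
    have hdet := hm.2
    rw [bruhatAux.det_fin_four] at hdet
    rw [h1, h2, h3, hm13, hm23, c1, c2] at hdet
    ring_nf at hdet
    have : (2:F) = 0 := by
      linear_combination (-1) * hdet + (-(m 1 1 * m 2 2)) * e0 + (-1) * c3
    exact hchar this
  refine ⟨SO4.mul hm w0_mem, ?_⟩
  intro i j hij
  fin_cases i <;> fin_cases j <;>
    simp only [Fin.zero_eta, Fin.mk_one, Fin.reduceFinMk] at hij ⊢ <;>
    first
      | exact absurd hij (by decide)
      | simp [w0_eq, Matrix.mul_apply, Fin.sum_univ_four,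
          Matrix.vecHead, Matrix.vecTail, h1, h2, h3, hm13, hm23, hm22]

end bruhatAux

open bruhatAux in
theorem bruhat_decomposition_SO4
    (F : Type*) [Field F] (hchar : (2 : F) ≠ 0) :
    SO4 F = doubleCoset F 1 ∪ doubleCoset F (sAlpha F) ∪ doubleCoset F (sBeta F)
        ∪ doubleCoset F (sAlpha F * sBeta F) ∧
    Disjoint (doubleCoset F 1) (doubleCoset F (sAlpha F)) ∧
    Disjoint (doubleCoset F 1) (doubleCoset F (sBeta F)) ∧
    Disjoint (doubleCoset F 1) (doubleCoset F (sAlpha F * sBeta F)) ∧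
    Disjoint (doubleCoset F (sAlpha F)) (doubleCoset F (sBeta F)) ∧
    Disjoint (doubleCoset F (sAlpha F)) (doubleCoset F (sAlpha F * sBeta F)) ∧
    Disjoint (doubleCoset F (sBeta F)) (doubleCoset F (sAlpha F * sBeta F)) := by
  refine ⟨Set.Subset.antisymm ?_ ?_, ?_, ?_, ?_, ?_, ?_, ?_⟩
  · -- SO4 ⊆ union of the four double cosets
    intro g hg
    by_cases hc0 : g 3 0 = 0
    · by_cases hc1 : g 3 1 = 0
      · by_cases hc2 : g 3 2 = 0
        · refine Set.mem_union_left _ (Set.mem_union_left _ (Set.mem_union_left _ ?_))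
          exact ⟨g, cell_one hchar hg hc0 hc1 hc2, 1, one_mem_B,
            by rw [Matrix.mul_one, Matrix.mul_one]⟩
        · -- s_α-cell : g 3 0 = g 3 1 = 0, g 3 2 ≠ 0
          refine Set.mem_union_left _ (Set.mem_union_left _ (Set.mem_union_right _ ?_))
          set u : F := g 3 3 / g 3 2 with hu
          have hinv : unip u 0 * unip (-u) (-0) = 1 := unip_mul_neg u 0
          rw [neg_zero] at hinv
          set m : Matrix (Fin 4) (Fin 4) F := g * unip u 0 with hmdef
          have hm : m ∈ SO4 F := SO4.mul hg (unip_mem u 0).1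
          have hz0 : m 3 0 = 0 := by
            simp [hmdef, unip, Matrix.mul_apply, Fin.sum_univ_four,
              Matrix.vecHead, Matrix.vecTail, hc0]
          have hz1 : m 3 1 = 0 := by
            simp [hmdef, unip, Matrix.mul_apply, Fin.sum_univ_four,
              Matrix.vecHead, Matrix.vecTail, hc0, hc1]
          have hz3 : m 3 3 = 0 := by
            have hentry : m 3 3 = g 3 2 * (-u) + g 3 3 := by
              simp [hmdef, unip, Matrix.mul_apply, Fin.sum_univ_four,
                Matrix.vecHead, Matrix.vecTail, hc0, hc1]
            rw [hentry, hu]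
            field_simp
            ring
          have hb1 : m * (-(sAlpha F)) ∈ BorelSO4 F := cell_alpha hchar hm hz0 hz1 hz3
          refine ⟨m * (-(sAlpha F)), hb1, unip (-u) 0, unip_mem (-u) 0, ?_⟩
          rw [Matrix.mul_assoc m, negsA_mul, Matrix.mul_one, hmdef,
            Matrix.mul_assoc, hinv, Matrix.mul_one]
      · -- s_β-cell : g 3 0 = 0, g 3 1 ≠ 0
        refine Set.mem_union_left _ (Set.mem_union_right _ ?_)
        have hc2 : g 3 2 = 0 := by
          have e := so4_row hg 3 3; rw [hc0] at e; norm_num [fv3] at e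
          have e' : (g 3 1 * g 3 2) * 2 = 0 := by linear_combination e
          exact (mul_eq_zero.mp ((mul_eq_zero.mp e').resolve_right hchar)).resolve_left hc1
        set v : F := g 3 3 / g 3 1 with hv
        have hinv : unip 0 v * unip (-0) (-v) = 1 := unip_mul_neg 0 v
        rw [neg_zero] at hinv
        set m : Matrix (Fin 4) (Fin 4) F := g * unip 0 v with hmdef
        have hm : m ∈ SO4 F := SO4.mul hg (unip_mem 0 v).1
        have hz0 : m 3 0 = 0 := by
          simp [hmdef, unip, Matrix.mul_apply, Fin.sum_univ_four,
            Matrix.vecHead, Matrix.vecTail, hc0]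
        have hz2 : m 3 2 = 0 := by
          simp [hmdef, unip, Matrix.mul_apply, Fin.sum_univ_four,
            Matrix.vecHead, Matrix.vecTail, hc0, hc2]
        have hz3 : m 3 3 = 0 := by
          have hentry : m 3 3 = g 3 1 * (-v) + g 3 3 := by
            simp [hmdef, unip, Matrix.mul_apply, Fin.sum_univ_four,
              Matrix.vecHead, Matrix.vecTail, hc0, hc2]
          rw [hentry, hv]
          field_simp
          ring
        have hb1 : m * (-(sBeta F)) ∈ BorelSO4 F := cell_beta hchar hm hz0 hz2 hz3
        refine ⟨m * (-(sBeta F)), hb1, unip 0 (-v), unip_mem 0 (-v), ?_⟩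
        rw [Matrix.mul_assoc m, negsB_mul, Matrix.mul_one, hmdef,
          Matrix.mul_assoc, hinv, Matrix.mul_one]
    · -- big cell : g 3 0 ≠ 0
      refine Set.mem_union_right _ ?_
      set u : F := -(g 3 1) / g 3 0 with hu
      set v : F := -(g 3 2) / g 3 0 with hv
      have hinv : unip u v * unip (-u) (-v) = 1 := unip_mul_neg u v
      have grel : g 3 0 * g 3 3 + g 3 1 * g 3 2 = 0 := by
        have e := so4_row hg 3 3; norm_num [fv3] at e
        have e' : (g 3 0 * g 3 3 + g 3 1 * g 3 2) * 2 = 0 := by linear_combination e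
        exact (mul_eq_zero.mp e').resolve_right hchar
      set m : Matrix (Fin 4) (Fin 4) F := g * unip u v with hmdef
      have hm : m ∈ SO4 F := SO4.mul hg (unip_mem u v).1
      have hz1 : m 3 1 = 0 := by
        have hentry : m 3 1 = g 3 0 * u + g 3 1 := by
          simp [hmdef, unip, Matrix.mul_apply, Fin.sum_univ_four,
            Matrix.vecHead, Matrix.vecTail]
        rw [hentry, hu]
        field_simp
        ring
      have hz2 : m 3 2 = 0 := by
        have hentry : m 3 2 = g 3 0 * v + g 3 2 := by
          simp [hmdef, unip, Matrix.mul_apply, Fin.sum_univ_four,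
            Matrix.vecHead, Matrix.vecTail]
        rw [hentry, hv]
        field_simp
        ring
      have hz3 : m 3 3 = 0 := by
        have hentry : m 3 3 = g 3 0 * (-(u * v)) + g 3 1 * (-v) + g 3 2 * (-u) + g 3 3 := by
          simp [hmdef, unip, Matrix.mul_apply, Fin.sum_univ_four,
            Matrix.vecHead, Matrix.vecTail]
        rw [hentry, hu, hv]
        field_simp
        linear_combination grel
      have hb1 : m * (sAlpha F * sBeta F) ∈ BorelSO4 F := cell_w0 hchar hm hz1 hz2 hz3
      refine ⟨m * (sAlpha F * sBeta F), hb1, unip (-u) (-v), unip_mem (-u) (-v), ?_⟩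
      rw [Matrix.mul_assoc m, w0_sq, Matrix.mul_one, hmdef,
        Matrix.mul_assoc, hinv, Matrix.mul_one]
  · -- union of the four double cosets ⊆ SO4
    intro x hx
    rcases hx with ((h | h) | h) | h
    · obtain ⟨b₁, hb₁, b₂, hb₂, rfl⟩ := h
      exact SO4.mul (SO4.mul hb₁.1 one_mem_SO4) hb₂.1
    · obtain ⟨b₁, hb₁, b₂, hb₂, rfl⟩ := h
      exact SO4.mul (SO4.mul hb₁.1 sA_mem) hb₂.1
    · obtain ⟨b₁, hb₁, b₂, hb₂, rfl⟩ := h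
      exact SO4.mul (SO4.mul hb₁.1 sB_mem) hb₂.1
    · obtain ⟨b₁, hb₁, b₂, hb₂, rfl⟩ := h
      exact SO4.mul (SO4.mul hb₁.1 w0_mem) hb₂.1
  · exact Set.disjoint_left.mpr fun x hx hx' => (dcA_row hx').2.2 (dc1_row hx).2.2.1
  · exact Set.disjoint_left.mpr fun x hx hx' => (dcB_row hx').2 (dc1_row hx).2.1
  · exact Set.disjoint_left.mpr fun x hx hx' => (dcW_row hx') (dc1_row hx).1
  · exact Set.disjoint_left.mpr fun x hx hx' => (dcB_row hx').2 (dcA_row hx).2.1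
  · exact Set.disjoint_left.mpr fun x hx hx' => (dcW_row hx') (dcA_row hx).1
  · exact Set.disjoint_left.mpr fun x hx hx' => (dcW_row hx') (dcB_row hx).1
end
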